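/- arXiv:cs/0210015 — 3 statements merged into one kernel-verified Lean document; each statement's English description precedes it below -/
import Mathlib

section
/- If [a,b] and [c,d] are nonempty closed bounded real intervals both of class M (a < 0 < b and c < 0 < d), then {x*y : x ∈ [a,b], y ∈ [c,d]} = [min(a*d, b*c), max(a*c, b*d)]. -/
/-- Interval multiplication, both operands of class M. -/
theorem interval_mul_M_M (a b c d : ℝ) (hab : a ≤ b) (hcd : c ≤ d)
    (ha : a < 0) (hb : 0 < b) (hc : c < 0) (hd : 0 < d) :
    {z : ℝ | ∃ x ∈ Set.Icc a b, ∃ y ∈ Set.Icc c d, z = x * y} =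
      Set.Icc (min (a * d) (b * c)) (max (a * c) (b * d)) := by
  ext z
  simp only [Set.mem_setOf_eq, Set.mem_Icc]
  constructor
  · rintro ⟨x, ⟨hx1, hx2⟩, y, ⟨hy1, hy2⟩, rfl⟩
    constructor
    · rcases le_or_gt 0 x with hx | hx
      · exact le_trans (min_le_right _ _) (by nlinarith)
      · exact le_trans (min_le_left _ _) (by nlinarith)
    · rcases le_or_gt 0 x with hx | hx
      · exact le_trans (by nlinarith) (le_max_right _ _)
      · exact le_trans (by nlinarith) (le_max_left _ _)
  · rintro ⟨h1, h2⟩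
    rcases le_or_gt 0 z with hz | hz
    · rcases le_max_iff.mp h2 with h | h
      · refine ⟨a, ⟨le_refl a, hab⟩, z / a, ⟨?_, ?_⟩, ?_⟩
        · rw [le_div_iff_of_neg ha]; nlinarith
        · exact le_trans (div_nonpos_of_nonneg_of_nonpos hz ha.le) hd.le
        · rw [mul_div_cancel₀ _ ha.ne]
      · refine ⟨b, ⟨hab, le_refl b⟩, z / b, ⟨?_, ?_⟩, ?_⟩
        · exact le_trans hc.le (div_nonneg hz hb.le)
        · rw [div_le_iff₀ hb]; nlinarith
        · rw [mul_div_cancel₀ _ hb.ne']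
    · rcases min_le_iff.mp h1 with h | h
      · refine ⟨a, ⟨le_refl a, hab⟩, z / a, ⟨?_, ?_⟩, ?_⟩
        · exact le_trans hc.le (div_nonneg_of_nonpos hz.le ha.le)
        · rw [div_le_iff_of_neg ha]; nlinarith
        · rw [mul_div_cancel₀ _ ha.ne]
      · refine ⟨b, ⟨hab, le_refl b⟩, z / b, ⟨?_, ?_⟩, ?_⟩
        · rw [le_div_iff₀ hb]; nlinarith
        · exact le_trans (div_nonpos_of_nonpos_of_nonneg hz.le hb.le) hd.le
        · rw [mul_div_cancel₀ _ hb.ne']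
end

section
/- Let [a,b] be of class P₁ (0 < a ≤ b) and [c,d] of class P with c = 0 < d. Then the relational division {z : ∃ x ∈ [a,b], ∃ y ∈ [c,d], z*y = x} = {z : z ≥ a/d} (an unbounded ray), which excludes 0. -/
open Set

def relDiv {α : Type*} [Mul α] (X Y : Set α) : Set α :=
  {z | ∃ x ∈ X, ∃ y ∈ Y, z * y = x}

theorem zero_notMem_relDiv {α : Type*} [MulZeroClass α] {X : Set α} (hX : (0 : α) ∉ X)
    (Y : Set α) : (0 : α) ∉ relDiv X Y := by
  rintro ⟨x, hx, y, -, rfl⟩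
  exact hX (by rwa [zero_mul] at hx)

theorem relDiv_Icc_Icc_zero {K : Type*} [Field K] [LinearOrder K] [IsStrictOrderedRing K]
    {a b d : K} (ha : 0 < a) (hab : a ≤ b) (hd : 0 < d) :
    relDiv (Icc a b) (Icc 0 d) = Ici (a / d) := by
  ext z
  constructor
  · rintro ⟨_, ⟨hazy, -⟩, y, ⟨hy0, hyd⟩, rfl⟩
    have hz : 0 < z := pos_of_mul_pos_left (ha.trans_le hazy) hy0
    rw [mem_Ici, div_le_iff₀ hd]
    calc a ≤ z * y := hazy
      _ ≤ z * d := mul_le_mul_of_nonneg_left hyd hz.le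
  · intro hz
    have hz0 : 0 < z := (div_pos ha hd).trans_le hz
    refine ⟨a, left_mem_Icc.2 hab, a / z, ⟨(div_pos ha hz0).le, ?_⟩, mul_div_cancel₀ a hz0.ne'⟩
    rw [div_le_iff₀ hz0, mul_comm]
    exact (div_le_iff₀ hd).1 hz

/-- Relational division, class P₁ by class P₀ (c = 0 < d): result is the ray [a/d, ∞),
which does not contain 0. -/
theorem interval_div_P1_P0 (a b d : ℝ) (hab : a ≤ b) (ha : 0 < a) (hd : 0 < d) :
    {z : ℝ | ∃ x ∈ Set.Icc a b, ∃ y ∈ Set.Icc (0 : ℝ) d, z * y = x} = {z : ℝ | a / d ≤ z} ∧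
    (0 : ℝ) ∉ {z : ℝ | ∃ x ∈ Set.Icc a b, ∃ y ∈ Set.Icc (0 : ℝ) d, z * y = x} :=
  ⟨relDiv_Icc_Icc_zero ha hab hd, zero_notMem_relDiv (fun h => ha.not_ge h.1) _⟩
end

section
/- Let [a,b] be of class P₁ (0 < a ≤ b) and [c,d] of class M (c < 0 < d). Then the relational division {z : ∃ x ∈ [a,b], ∃ y ∈ [c,d], z*y = x} = {z : z ≤ a/c} ∪ {z : z ≥ a/d}, a set not containing 0. -/
/-- Relational division, class P₁ by class M (c < 0 < d): result is the union of two
rays (-∞, a/c] ∪ [a/d, ∞), a set not containing 0. -/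
theorem interval_div_P1_M (a b c d : ℝ) (hab : a ≤ b) (ha : 0 < a)
    (hc : c < 0) (hd : 0 < d) :
    {z : ℝ | ∃ x ∈ Set.Icc a b, ∃ y ∈ Set.Icc c d, z * y = x} =
      {z : ℝ | z ≤ a / c} ∪ {z : ℝ | a / d ≤ z} ∧
    (0 : ℝ) ∉ {z : ℝ | ∃ x ∈ Set.Icc a b, ∃ y ∈ Set.Icc c d, z * y = x} := by
  constructor
  · ext z
    simp only [Set.mem_setOf_eq, Set.mem_union, Set.mem_Icc]
    constructor
    · rintro ⟨x, ⟨hax, hxb⟩, y, ⟨hcy, hyd⟩, hzy⟩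
      rcases lt_trichotomy y 0 with hy | hy | hy
      · left
        have hz : z < 0 := by nlinarith
        rw [le_div_iff_of_neg hc]
        nlinarith
      · exfalso; rw [hy, mul_zero] at hzy; linarith
      · right
        have hz : 0 < z := by nlinarith
        rw [div_le_iff₀ hd]
        nlinarith
    · rintro (hz | hz)
      · have hac : a / c < 0 := div_neg_of_pos_of_neg ha hc
        have hzneg : z < 0 := lt_of_le_of_lt hz hac
        have hz' : a ≤ z * c := (le_div_iff_of_neg hc).mp hz
        refine ⟨a, ⟨le_refl a, hab⟩, a / z, ⟨?_, ?_⟩, ?_⟩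
        · rw [le_div_iff_of_neg hzneg]; nlinarith
        · have : a / z < 0 := div_neg_of_pos_of_neg ha hzneg
          linarith
        · rw [mul_comm, div_mul_cancel₀ _ hzneg.ne]
      · have had : 0 < a / d := div_pos ha hd
        have hzpos : 0 < z := lt_of_lt_of_le had hz
        have hz' : a ≤ z * d := (div_le_iff₀ hd).mp hz
        refine ⟨a, ⟨le_refl a, hab⟩, a / z, ⟨?_, ?_⟩, ?_⟩
        · have : 0 < a / z := div_pos ha hzpos
          linarith
        · rw [div_le_iff₀ hzpos]; nlinarith
        · rw [mul_comm, div_mul_cancel₀ _ hzpos.ne']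
  · rintro ⟨x, ⟨hax, _⟩, y, _, hzy⟩
    rw [zero_mul] at hzy; linarith
end
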